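/- If the loss function is piecewise affine in ξ, i.e., ℓ(x, ξ) = max_{j∈[J]} a_j(x)ᵀξ + b_j(x), then the sample-average distributionally robust problem min_{x∈X, λ≥0} ε²λ + (1/M)Σ_{m∈[M]} sup_{ω∈ℝ^R}(ℓ(x, ω) − λ‖ω − ξ_m‖²) is equivalent to the second-order conic program: minimize ε²λ + (1/M)Σ_m γ_m over x ∈ X, λ ≥ 0, γ ∈ ℝ^M, subject to, for all j ∈ [J] and m ∈ [M], ‖(2λξ_m + a_j(x), λξ_mᵀξ_m + γ_m − b_j(x) − λ)‖ ≤ λξ_mᵀξ_m + γ_m − b_j(x) + λ and λξ_mᵀξ_m + γ_m ≥ b_j(x); i.e., the two problems have the same optimal value and the same optimal decisions x. -/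

import Mathlib

/-!
Fix `x` and `λ ≥ 0`, and write `s = λ ξ_mᵀξ_m + γ_m − b_j(x)`. Expanding `‖ω − ξ_m‖²`, the bound
`a_j(x)ᵀω + b_j(x) − λ‖ω − ξ_m‖² ≤ γ_m` for all `ω` says that the quadratic
`λ ωᵀω − (2λξ_m + a_j(x))ᵀω + s` is nonnegative, i.e. (discriminant) that
`‖2λξ_m + a_j(x)‖² ≤ 4λs` and `s ≥ 0`, which is exactly the (j, m) second-order cone constraint.
So the cone constraints say `γ_m ≥ sup_ω ℓ(x, ω) − λ‖ω − ξ_m‖²` for every `m`, and minimising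
over `γ` gives back the DRO objective at `(x, λ)`, with the minimum attained when it is finite.
Since every `λ > 0` is feasible the optimal value is finite, so the two problems share their value
and their optimal `x`.
-/

open Matrix

noncomputable section

/-- Euclidean norm of a vector `v : ι → ℝ`. -/
def eNorm {ι : Type*} [Fintype ι] (v : ι → ℝ) : ℝ := Real.sqrt (∑ i, v i ^ 2)

/-- The inner objective of the Lagrangian-dual sample-average DRO problem:
`ε²λ + (1/M) Σ_m sup_ω (max_j a_j(x)ᵀω + b_j(x) − λ‖ω − ξ_m‖²)`, valued in `EReal`. -/
def droObj {n R J M : ℕ} (hJ : 0 < J) (ε : ℝ)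
    (a : Fin J → (Fin n → ℝ) → Fin R → ℝ) (b : Fin J → (Fin n → ℝ) → ℝ)
    (ξ : Fin M → Fin R → ℝ) (x : Fin n → ℝ) (lam : ℝ) : EReal :=
  ((ε ^ 2 * lam : ℝ) : EReal) +
    (((M : ℝ)⁻¹ : ℝ) : EReal) *
      ∑ m : Fin M, ⨆ ω : Fin R → ℝ,
        (((Finset.univ.sup' ⟨⟨0, hJ⟩, Finset.mem_univ _⟩ fun j => a j x ⬝ᵥ ω + b j x) -
            lam * eNorm (ω - ξ m) ^ 2 : ℝ) : EReal)

/-- The second-order conic constraints of the reformulation. -/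
def socpFeas {n R J M : ℕ} (a : Fin J → (Fin n → ℝ) → Fin R → ℝ)
    (b : Fin J → (Fin n → ℝ) → ℝ) (ξ : Fin M → Fin R → ℝ)
    (x : Fin n → ℝ) (lam : ℝ) (γ : Fin M → ℝ) : Prop :=
  ∀ (j : Fin J) (m : Fin M),
    Real.sqrt (eNorm (fun i => 2 * lam * ξ m i + a j x i) ^ 2 +
        (lam * (ξ m ⬝ᵥ ξ m) + γ m - b j x - lam) ^ 2) ≤
      lam * (ξ m ⬝ᵥ ξ m) + γ m - b j x + lam ∧
    b j x ≤ lam * (ξ m ⬝ᵥ ξ m) + γ m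

/-- The linear objective of the SOCP reformulation. -/
def socpObj {M : ℕ} (ε lam : ℝ) (γ : Fin M → ℝ) : ℝ := ε ^ 2 * lam + (M : ℝ)⁻¹ * ∑ m, γ m

theorem eNorm_sq {ι : Type*} [Fintype ι] (v : ι → ℝ) : eNorm v ^ 2 = v ⬝ᵥ v := by
  rw [eNorm, Real.sq_sqrt (Finset.sum_nonneg fun i _ => sq_nonneg (v i))]
  exact Finset.sum_congr rfl fun i _ => sq (v i)

theorem dotProduct_self_nonneg {ι : Type*} [Fintype ι] (v : ι → ℝ) : 0 ≤ v ⬝ᵥ v :=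
  Finset.sum_nonneg fun i _ => mul_self_nonneg (v i)

/-- `(s + λ)² − (s − λ)² = 4λs`: with `q = ‖u‖²` this is the rotated cone `‖u‖² ≤ 4λs` written as
a second-order cone constraint. -/
theorem sqrt_add_sq_sub_le_add_iff {q s lam : ℝ} (hlam : 0 ≤ lam) :
    (√(q + (s - lam) ^ 2) ≤ s + lam ∧ 0 ≤ s) ↔ (q ≤ 4 * lam * s ∧ 0 ≤ s) :=
  and_congr_left fun hs => by
    rw [Real.sqrt_le_left (by linarith)]
    constructor <;> intro h <;> linarith

theorem forall_dotProduct_le_mul_dotProduct_self_add_iff {ι : Type*} [Fintype ι] {lam s : ℝ}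
    (hlam : 0 ≤ lam) (u : ι → ℝ) :
    (∀ ω : ι → ℝ, u ⬝ᵥ ω ≤ lam * (ω ⬝ᵥ ω) + s) ↔ (u ⬝ᵥ u ≤ 4 * lam * s ∧ 0 ≤ s) := by
  have huu := dotProduct_self_nonneg u
  constructor
  · intro h
    have hs : 0 ≤ s := by simpa using h 0
    -- restricted to the line `t • u`, the quadratic in `t` is nonnegative
    have hdisc : discrim (lam * (u ⬝ᵥ u)) (-(u ⬝ᵥ u)) s ≤ 0 := discrim_le_zero fun t => by
      have := h (t • u)
      simp only [dotProduct_smul, smul_dotProduct, smul_eq_mul] at this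
      linarith
    rw [discrim] at hdisc
    exact ⟨by nlinarith [mul_nonneg hlam hs], hs⟩
  · rintro ⟨hus, hs⟩ ω
    rcases hlam.eq_or_lt with rfl | hpos
    · have hu : u = 0 := dotProduct_self_eq_zero.1 (by linarith)
      simpa [hu] using hs
    · have hsq : 4 * lam * (lam * (ω ⬝ᵥ ω) + s - u ⬝ᵥ ω) =
          ((2 * lam) • ω - u) ⬝ᵥ ((2 * lam) • ω - u) + (4 * lam * s - u ⬝ᵥ u) := by
        simp only [sub_dotProduct, dotProduct_sub, smul_dotProduct, dotProduct_smul, smul_eq_mul,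
          dotProduct_comm u ω]
        ring
      have : 0 ≤ 4 * lam * (lam * (ω ⬝ᵥ ω) + s - u ⬝ᵥ ω) := by
        rw [hsq]
        exact add_nonneg (dotProduct_self_nonneg _) (by linarith)
      linarith [(mul_nonneg_iff_of_pos_left (by positivity)).1 this]

theorem dotProduct_add_sub_mul_eNorm_sq_le_iff {ι : Type*} [Fintype ι] (lam b γ : ℝ)
    (a ξ ω : ι → ℝ) :
    a ⬝ᵥ ω + b - lam * eNorm (ω - ξ) ^ 2 ≤ γ ↔
      (fun i => 2 * lam * ξ i + a i) ⬝ᵥ ω ≤ lam * (ω ⬝ᵥ ω) + (lam * (ξ ⬝ᵥ ξ) + γ - b) := by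
  have hnorm : eNorm (ω - ξ) ^ 2 = ω ⬝ᵥ ω - 2 * (ξ ⬝ᵥ ω) + ξ ⬝ᵥ ξ := by
    rw [eNorm_sq, sub_dotProduct, dotProduct_sub, dotProduct_sub, dotProduct_comm ω ξ]
    ring
  have hu : (fun i => 2 * lam * ξ i + a i) ⬝ᵥ ω = 2 * lam * (ξ ⬝ᵥ ω) + a ⬝ᵥ ω := by
    simp only [dotProduct, add_mul, Finset.sum_add_distrib, Finset.mul_sum, mul_assoc]
  rw [hnorm, hu]
  constructor <;> intro h <;> linarith

theorem socConstraint_iff_forall_le {ι : Type*} [Fintype ι] {lam : ℝ} (hlam : 0 ≤ lam)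
    (a ξ : ι → ℝ) (b γ : ℝ) :
    (√(eNorm (fun i => 2 * lam * ξ i + a i) ^ 2 + (lam * (ξ ⬝ᵥ ξ) + γ - b - lam) ^ 2) ≤
        lam * (ξ ⬝ᵥ ξ) + γ - b + lam ∧ b ≤ lam * (ξ ⬝ᵥ ξ) + γ) ↔
      ∀ ω, a ⬝ᵥ ω + b - lam * eNorm (ω - ξ) ^ 2 ≤ γ := by
  simp only [dotProduct_add_sub_mul_eNorm_sq_le_iff]
  rw [forall_dotProduct_le_mul_dotProduct_self_add_iff hlam, eNorm_sq,
    ← sqrt_add_sq_sub_le_add_iff hlam, sub_nonneg]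

theorem exists_forall_dotProduct_add_sub_mul_eNorm_sq_le {ι : Type*} [Fintype ι] {lam : ℝ}
    (hlam : 0 < lam) (a ξ : ι → ℝ) (b : ℝ) :
    ∃ γ : ℝ, ∀ ω, a ⬝ᵥ ω + b - lam * eNorm (ω - ξ) ^ 2 ≤ γ := by
  set u : ι → ℝ := fun i => 2 * lam * ξ i + a i
  refine ⟨u ⬝ᵥ u / (4 * lam) - lam * (ξ ⬝ᵥ ξ) + b, fun ω => ?_⟩
  have hs : lam * (ξ ⬝ᵥ ξ) + (u ⬝ᵥ u / (4 * lam) - lam * (ξ ⬝ᵥ ξ) + b) - b =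
      u ⬝ᵥ u / (4 * lam) := by
    ring
  rw [dotProduct_add_sub_mul_eNorm_sq_le_iff, hs]
  have := dotProduct_self_nonneg u
  exact (forall_dotProduct_le_mul_dotProduct_self_add_iff hlam.le u).2
    ⟨(mul_div_cancel₀ _ (by positivity)).ge, by positivity⟩ ω

namespace EReal

theorem sum_eq_top_of_ne_bot {ι : Type*} {s : Finset ι} {S : ι → EReal} (hS : ∀ i ∈ s, S i ≠ ⊥)
    {i : ι} (hi : i ∈ s) (htop : S i = ⊤) : ∑ j ∈ s, S j = ⊤ := by
  classical
  rw [← Finset.add_sum_erase s S hi, htop]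
  exact top_add_of_ne_bot <| Finset.sum_induction _ (· ≠ ⊥)
    (fun _ _ hx hy => add_ne_bot_iff.2 ⟨hx, hy⟩) zero_ne_bot
    fun j hj => hS j (Finset.mem_of_mem_erase hj)

theorem coe_sum {ι : Type*} (s : Finset ι) (f : ι → ℝ) :
    ((∑ i ∈ s, f i : ℝ) : EReal) = ∑ i ∈ s, (f i : EReal) :=
  map_sum (⟨⟨fun r : ℝ => (r : EReal), coe_zero⟩, coe_add⟩ : ℝ →+ EReal) f s

variable {ι : Type*} [Fintype ι] (base : ℝ) {c : ℝ} {S : ι → EReal}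

theorem exists_coe_add_coe_mul_sum_eq (hc : 0 < c) (hS : ∀ i, S i ≠ ⊥)
    (h : (base : EReal) + c * ∑ i, S i ≠ ⊤) :
    ∃ γ : ι → ℝ, (∀ i, S i ≤ γ i) ∧ ((base + c * ∑ i, γ i : ℝ) : EReal) = base + c * ∑ i, S i := by
  have hfin : ∀ i, S i ≠ ⊤ := fun i hi => h <| by
    rw [sum_eq_top_of_ne_bot (fun j _ => hS j) (Finset.mem_univ i) hi, coe_mul_top_of_pos hc,
      coe_add_top]
  refine ⟨fun i => (S i).toReal, fun i => (coe_toReal (hfin i) (hS i)).ge, ?_⟩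
  rw [coe_add, coe_mul, coe_sum]
  simp only [coe_toReal (hfin _) (hS _)]

theorem coe_add_coe_mul_sum_eq_iInf (hc : 0 < c) (hS : ∀ i, S i ≠ ⊥) :
    (base : EReal) + c * ∑ i, S i =
      ⨅ (γ : ι → ℝ) (_ : ∀ i, S i ≤ γ i), ((base + c * ∑ i, γ i : ℝ) : EReal) := by
  refine le_antisymm (le_iInf₂ fun γ hγ => ?_) ?_
  · rw [coe_add, coe_mul, coe_sum]
    gcongr with i
    exact hγ i
  · by_cases h : (base : EReal) + c * ∑ i, S i = ⊤
    · exact h ▸ le_top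
    · obtain ⟨γ, hγ, heq⟩ := exists_coe_add_coe_mul_sum_eq base hc hS h
      exact heq ▸ iInf₂_le γ hγ

end EReal

section DRO

variable {n R J M : ℕ} (hJ : 0 < J) (a : Fin J → (Fin n → ℝ) → Fin R → ℝ)
  (b : Fin J → (Fin n → ℝ) → ℝ) (ξ : Fin M → Fin R → ℝ) (x : Fin n → ℝ)

/-- `sup_ω ℓ(x, ω) − λ‖ω − ξ_m‖²`, the `m`-th summand of `droObj`. -/
def penalizedSup (lam : ℝ) (m : Fin M) : EReal :=
  ⨆ ω : Fin R → ℝ,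
    (((Finset.univ.sup' ⟨⟨0, hJ⟩, Finset.mem_univ _⟩ fun j => a j x ⬝ᵥ ω + b j x) -
      lam * eNorm (ω - ξ m) ^ 2 : ℝ) : EReal)

theorem droObj_eq_sum_penalizedSup (ε : ℝ) (lam : ℝ) :
    droObj hJ ε a b ξ x lam =
      ((ε ^ 2 * lam : ℝ) : EReal) + ((M : ℝ)⁻¹ : ℝ) * ∑ m, penalizedSup hJ a b ξ x lam m :=
  rfl

theorem penalizedSup_ne_bot (lam : ℝ) (m : Fin M) : penalizedSup hJ a b ξ x lam m ≠ ⊥ :=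
  ne_bot_of_le_ne_bot (EReal.coe_ne_bot _) (le_iSup_of_le 0 le_rfl)

theorem penalizedSup_le_coe_iff (lam : ℝ) (m : Fin M) (γ : ℝ) :
    penalizedSup hJ a b ξ x lam m ≤ γ ↔
      ∀ j ω, a j x ⬝ᵥ ω + b j x - lam * eNorm (ω - ξ m) ^ 2 ≤ γ := by
  simp only [penalizedSup, iSup_le_iff, EReal.coe_le_coe_iff, sub_le_iff_le_add]
  rw [forall_comm]
  exact forall_congr' fun ω => (Finset.sup'_le_iff _ _).trans <| by
    simp only [Finset.mem_univ, true_implies]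

theorem socpFeas_iff_forall_le {lam : ℝ} (hlam : 0 ≤ lam) (γ : Fin M → ℝ) :
    socpFeas a b ξ x lam γ ↔ ∀ j m ω, a j x ⬝ᵥ ω + b j x - lam * eNorm (ω - ξ m) ^ 2 ≤ γ m :=
  forall₂_congr fun _ _ => socConstraint_iff_forall_le hlam _ _ _ _

theorem socpFeas_iff_penalizedSup_le {lam : ℝ} (hlam : 0 ≤ lam) (γ : Fin M → ℝ) :
    socpFeas a b ξ x lam γ ↔ ∀ m, penalizedSup hJ a b ξ x lam m ≤ γ m := by
  simp only [socpFeas_iff_forall_le a b ξ x hlam, penalizedSup_le_coe_iff]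
  exact forall_comm

theorem exists_socpFeas {lam : ℝ} (hlam : 0 < lam) : ∃ γ, socpFeas a b ξ x lam γ := by
  choose c hc using fun j m =>
    exists_forall_dotProduct_add_sub_mul_eNorm_sq_le hlam (a j x) (ξ m) (b j x)
  choose γ hγ using fun m => Finite.bddAbove_range fun j => c j m
  exact ⟨γ, (socpFeas_iff_forall_le a b ξ x hlam.le γ).2 fun j m ω =>
    (hc j m ω).trans (hγ m ⟨j, rfl⟩)⟩

theorem droObj_eq_iInf_socpObj (hM : 0 < M) (ε : ℝ) {lam : ℝ} (hlam : 0 ≤ lam) :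
    droObj hJ ε a b ξ x lam =
      ⨅ (γ : Fin M → ℝ) (_ : socpFeas a b ξ x lam γ), ((socpObj ε lam γ : ℝ) : EReal) := by
  rw [droObj_eq_sum_penalizedSup, EReal.coe_add_coe_mul_sum_eq_iInf _
    (inv_pos.2 (Nat.cast_pos.2 hM)) (penalizedSup_ne_bot hJ a b ξ x lam)]
  simp only [socpFeas_iff_penalizedSup_le hJ a b ξ x hlam]
  rfl

theorem exists_socpObj_eq_droObj (hM : 0 < M) (ε : ℝ) {lam : ℝ} (hlam : 0 ≤ lam)
    (h : droObj hJ ε a b ξ x lam ≠ ⊤) :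
    ∃ γ, socpFeas a b ξ x lam γ ∧ ((socpObj ε lam γ : ℝ) : EReal) = droObj hJ ε a b ξ x lam := by
  obtain ⟨γ, hγ, heq⟩ := EReal.exists_coe_add_coe_mul_sum_eq _ (inv_pos.2 (Nat.cast_pos.2 hM))
    (penalizedSup_ne_bot hJ a b ξ x lam) h
  exact ⟨γ, (socpFeas_iff_penalizedSup_le hJ a b ξ x hlam γ).2 hγ, heq⟩

end DRO

/-- **SOCP reformulation of the type-2 Wasserstein DRO problem with piecewise affine loss.**
If `ℓ(x, ξ) = max_{j∈[J]} a_j(x)ᵀξ + b_j(x)`, then the sample-average distributionally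
robust problem `min_{x∈X, λ≥0} ε²λ + (1/M)Σ_m sup_ω (ℓ(x,ω) − λ‖ω−ξ_m‖²)` is equivalent
to the stated second-order conic program: the two problems have the same optimal value and
the same optimal decisions `x`. -/
theorem dro_socp_reformulation {n R J M : ℕ} (hJ : 0 < J) (hM : 0 < M)
    (X : Set (Fin n → ℝ)) (ε : ℝ)
    (a : Fin J → (Fin n → ℝ) → Fin R → ℝ) (b : Fin J → (Fin n → ℝ) → ℝ)
    (ξ : Fin M → Fin R → ℝ) :
    (⨅ (x : Fin n → ℝ) (_ : x ∈ X) (lam : ℝ) (_ : 0 ≤ lam), droObj hJ ε a b ξ x lam) =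
      (⨅ (x : Fin n → ℝ) (_ : x ∈ X) (lam : ℝ) (_ : 0 ≤ lam) (γ : Fin M → ℝ)
        (_ : socpFeas a b ξ x lam γ), ((socpObj ε lam γ : ℝ) : EReal)) ∧
    ∀ x ∈ X,
      ((∃ lam : ℝ, 0 ≤ lam ∧
          droObj hJ ε a b ξ x lam =
            ⨅ (x' : Fin n → ℝ) (_ : x' ∈ X) (lam' : ℝ) (_ : 0 ≤ lam'),
              droObj hJ ε a b ξ x' lam') ↔
        (∃ (lam : ℝ) (γ : Fin M → ℝ), 0 ≤ lam ∧ socpFeas a b ξ x lam γ ∧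
          ((socpObj ε lam γ : ℝ) : EReal) =
            ⨅ (x' : Fin n → ℝ) (_ : x' ∈ X) (lam' : ℝ) (_ : 0 ≤ lam') (γ' : Fin M → ℝ)
              (_ : socpFeas a b ξ x' lam' γ'), ((socpObj ε lam' γ' : ℝ) : EReal))) := by
  have hdual := fun x lam (hlam : 0 ≤ lam) => droObj_eq_iInf_socpObj hJ a b ξ x hM ε hlam
  have hval := biInf_congr fun x (_ : x ∈ X) => biInf_congr fun lam hlam => hdual x lam hlam
  refine ⟨hval, fun x hx => ⟨?_, ?_⟩⟩
  · rintro ⟨lam, hlam, hopt⟩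
    obtain ⟨γ₁, hγ₁⟩ := exists_socpFeas a b ξ x one_pos
    have hfin : droObj hJ ε a b ξ x lam ≠ ⊤ := by
      refine hopt ▸ ne_top_of_le_ne_top (EReal.coe_ne_top (socpObj ε 1 γ₁)) ?_
      exact iInf₂_le_of_le x hx <| iInf₂_le_of_le 1 zero_le_one <|
        (hdual x 1 zero_le_one).trans_le (iInf₂_le γ₁ hγ₁)
    obtain ⟨γ, hγ, hobj⟩ := exists_socpObj_eq_droObj hJ a b ξ x hM ε hlam hfin
    exact ⟨lam, γ, hlam, hγ, hobj.trans (hopt.trans hval)⟩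
  · rintro ⟨lam, γ, hlam, hγ, hopt⟩
    refine ⟨lam, hlam, le_antisymm ?_ (iInf₂_le_of_le x hx (iInf₂_le lam hlam))⟩
    calc droObj hJ ε a b ξ x lam
        = ⨅ (γ' : Fin M → ℝ) (_ : socpFeas a b ξ x lam γ'), ((socpObj ε lam γ' : ℝ) : EReal) :=
          hdual x lam hlam
      _ ≤ socpObj ε lam γ := iInf₂_le γ hγ
      _ = _ := hopt.trans hval.symm
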